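/- For every odd positive integer p = 2m+1, the double sum ∑_{m'=1}^{p} ∑_{k=0}^{p} (-1)^{m'+k} (1/m') · C(p,k)^2 · C(p, m'+k) equals (-1)^{(p+1)/2} (3p)!! / (3 · (p!!)^3), where n!! is the double factorial and C(p,j) = 0 for j > p. -/

import Mathlib

/-!
Write `D(p, k) = ∑_{m ≥ 1} (-1)^m C(p, k + m) / m` (`shiftedAltSum`), so that the double sum
is `∑ₖ (-1)^k C(p, k)² D(p, k)`. Pascal's rule gives `D(p, i) - D(p, j) = C(p, i) (H_i - H_j)`
whenever `i + j = p`. For odd `p` the reflection `k ↦ p - k` reverses the sign `(-1)^k`, so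
symmetrizing turns the double sum into `B(p) = ∑ₖ (-1)^k C(p, k)³ H_k` (`altCubeHarmonicSum`).
Creative telescoping yields `(p + 2)² B(p + 2) = -3 (3p + 2)(3p + 4) B(p)` for odd `p` (the
extra sums `∑ₖ (-1)^k C(p, k)³` it produces vanish by the same reflection), and the double
factorial expression satisfies the same recurrence.
-/

open Finset
open scoped Nat

section

variable {R : Type*} [CommRing R]

theorem neg_one_pow_sub_of_odd {n k : ℕ} (hn : Odd n) (hk : k ≤ n) :
    (-1 : R) ^ (n - k) = -(-1) ^ k := by
  have hsq : ((-1 : R) ^ k) ^ 2 = 1 := by rw [← pow_mul, mul_comm, pow_mul, neg_one_sq, one_pow]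
  calc (-1 : R) ^ (n - k) = (-1) ^ (n - k + k) * (-1) ^ k := by
        rw [pow_add, mul_assoc, ← sq, hsq, mul_one]
    _ = -(-1) ^ k := by rw [Nat.sub_add_cancel hk, hn.neg_one_pow, neg_one_mul]

theorem sum_range_neg_one_pow_mul_reflect_of_odd {n : ℕ} (hn : Odd n) {w g : ℕ → R}
    (hw : ∀ k ≤ n, w (n - k) = w k) :
    ∑ k ∈ range (n + 1), (-1) ^ k * w k * g (n - k) =
      -∑ k ∈ range (n + 1), (-1) ^ k * w k * g k := by
  rw [← sum_range_reflect, ← sum_neg_distrib]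
  refine sum_congr rfl fun k hk => ?_
  have hk : k ≤ n := Nat.lt_succ_iff.mp (mem_range.mp hk)
  rw [Nat.add_sub_cancel, Nat.sub_sub_self hk, neg_one_pow_sub_of_odd hn hk, hw k hk]
  ring

theorem sum_range_neg_one_pow_mul_choose_pow_of_odd [IsAddTorsionFree R] {n : ℕ}
    (hn : Odd n) (r : ℕ) : ∑ k ∈ range (n + 1), (-1 : R) ^ k * (n.choose k : R) ^ r = 0 := by
  have h := sum_range_neg_one_pow_mul_reflect_of_odd hn (w := fun k => (n.choose k : R) ^ r)
    (g := fun _ => 1) fun k hk => by simp only [Nat.choose_symm hk]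
  simp only [mul_one] at h
  exact self_eq_neg.mp h

theorem cast_choose_mul_succ (n k : ℕ) :
    (n.choose k : R) * (n + 1) = ((n + 1).choose k : R) * (n + 1 - k) := by
  rcases le_or_gt k (n + 1) with h | h
  · exact_mod_cast congrArg (Nat.cast (R := R)) (Nat.choose_mul_succ_eq n k) |>.trans
      (by push_cast [Nat.cast_sub h]; ring)
  · simp [Nat.choose_eq_zero_of_lt h, Nat.choose_eq_zero_of_lt (Nat.lt_of_succ_lt h)]

theorem cast_choose_succ_right (n k : ℕ) :
    (n.choose (k + 1) : R) * (k + 1) = (n.choose k : R) * (n - k) := by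
  rcases le_or_gt k n with h | h
  · exact_mod_cast congrArg (Nat.cast (R := R)) (Nat.choose_succ_right_eq n k) |>.trans
      (by push_cast [Nat.cast_sub h]; ring)
  · simp [Nat.choose_eq_zero_of_lt h, Nat.choose_eq_zero_of_lt (Nat.lt_succ_of_lt h)]

end

def shiftedAltSum (p k : ℕ) : ℚ := ∑ m ∈ Icc 1 p, (-1) ^ m * (p.choose (m + k) : ℚ) / m

theorem shiftedAltSum_eq_sum_Icc {p N : ℕ} (k : ℕ) (h : p ≤ N) :
    shiftedAltSum p k = ∑ m ∈ Icc 1 N, (-1) ^ m * (p.choose (m + k) : ℚ) / m := by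
  refine sum_subset (Icc_subset_Icc_right h) fun m hm hm' => ?_
  rw [Nat.choose_eq_zero_of_lt (by simp only [mem_Icc] at hm hm'; omega)]
  simp

theorem shiftedAltSum_self (p : ℕ) : shiftedAltSum p p = 0 :=
  sum_eq_zero fun m hm => by
    rw [Nat.choose_eq_zero_of_lt (by simp only [mem_Icc] at hm; omega)]
    simp

theorem shiftedAltSum_succ_succ (p k : ℕ) :
    shiftedAltSum (p + 1) (k + 1) = shiftedAltSum p (k + 1) + shiftedAltSum p k := by
  rw [shiftedAltSum_eq_sum_Icc (k + 1) p.le_succ, shiftedAltSum_eq_sum_Icc k p.le_succ,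
    shiftedAltSum, ← sum_add_distrib]
  refine sum_congr rfl fun m _ => ?_
  rw [← add_assoc, Nat.choose_succ_succ']
  push_cast
  ring

theorem sum_Icc_neg_one_pow_mul_choose (n : ℕ) :
    ∑ m ∈ Icc 1 (n + 1), (-1 : ℚ) ^ m * ((n + 1).choose m : ℚ) = -1 := by
  have h := congrArg (Int.cast (R := ℚ)) (Int.alternating_sum_range_choose_of_ne n.succ_ne_zero)
  push_cast at h
  rw [range_eq_Ico, sum_eq_sum_Ico_succ_bot (by omega), Ico_add_one_right_eq_Icc] at h
  simpa [add_eq_zero_iff_eq_neg'] using h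

theorem shiftedAltSum_zero (n : ℕ) : shiftedAltSum n 0 = -harmonic n := by
  induction n with
  | zero => simp [shiftedAltSum]
  | succ n ih =>
    have hpascal : ∀ m ∈ Icc 1 (n + 1), (-1 : ℚ) ^ m * ((n + 1).choose (m + 0) : ℚ) / m =
        (-1) ^ m * (n.choose (m + 0) : ℚ) / m + (-1) ^ m * ((n + 1).choose m : ℚ) / (n + 1) := by
      intro m hm
      obtain ⟨j, rfl⟩ : ∃ j, m = j + 1 := ⟨m - 1, by simp only [mem_Icc] at hm; omega⟩
      have habsorb : ((n + 1) * n.choose j : ℚ) = (n + 1).choose (j + 1) * (j + 1) := by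
        exact_mod_cast Nat.add_one_mul_choose_eq n j
      have hchoose : ((n + 1).choose (j + 1) : ℚ) = n.choose j + n.choose (j + 1) := by
        exact_mod_cast Nat.choose_succ_succ' n j
      have key : ((n + 1).choose (j + 1) : ℚ) / (j + 1) =
          n.choose (j + 1) / (j + 1) + (n + 1).choose (j + 1) / (n + 1) := by
        rw [div_add_div _ _ (by positivity) (by positivity),
          div_eq_div_iff (by positivity) (by positivity)]
        linear_combination ((j + 1) * (n + 1) : ℚ) * hchoose + (j + 1 : ℚ) * habsorb
      push_cast
      linear_combination (-1 : ℚ) ^ (j + 1) * key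
    rw [shiftedAltSum, sum_congr rfl hpascal, sum_add_distrib,
      ← shiftedAltSum_eq_sum_Icc 0 n.le_succ, ih, ← sum_div, sum_Icc_neg_one_pow_mul_choose,
      harmonic_succ]
    push_cast
    ring

theorem shiftedAltSum_sub_shiftedAltSum {p i j : ℕ} (h : i + j = p) :
    shiftedAltSum p i - shiftedAltSum p j = p.choose i * (harmonic i - harmonic j) := by
  induction p generalizing i j with
  | zero =>
    obtain ⟨rfl, rfl⟩ : i = 0 ∧ j = 0 := by omega
    simp
  | succ p ih =>
    rcases i with _ | i
    · obtain rfl : j = p + 1 := by omega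
      simp [shiftedAltSum_zero, shiftedAltSum_self]
    rcases j with _ | j
    · obtain rfl : i = p := by omega
      simp [shiftedAltSum_zero, shiftedAltSum_self]
    have h₁ := ih (i := i + 1) (j := j) (by omega)
    have h₂ := ih (i := i) (j := j + 1) (by omega)
    have habsorb : (p.choose i : ℚ) / (i + 1) = p.choose (i + 1) / (j + 1) := by
      rw [div_eq_div_iff (by positivity) (by positivity), cast_choose_succ_right,
        show p = i + j + 1 by omega]
      push_cast
      ring
    rw [shiftedAltSum_succ_succ, shiftedAltSum_succ_succ, Nat.choose_succ_succ', harmonic_succ,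
      harmonic_succ] at *
    push_cast at *
    linear_combination h₁ + h₂ - habsorb

def altCubeHarmonicSum (n : ℕ) : ℚ :=
  ∑ k ∈ range (n + 1), (-1) ^ k * (n.choose k : ℚ) ^ 3 * harmonic k

theorem sum_Icc_sum_range_eq_altCubeHarmonicSum {p : ℕ} (hp : Odd p) :
    ∑ m ∈ Icc 1 p, ∑ k ∈ range (p + 1),
        (-1 : ℚ) ^ (m + k) * (1 / (m : ℚ)) * (p.choose k : ℚ) ^ 2 * (p.choose (m + k) : ℚ) =
      altCubeHarmonicSum p := by
  rw [sum_comm]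
  set S := ∑ k ∈ range (p + 1), (-1) ^ k * (p.choose k : ℚ) ^ 2 * shiftedAltSum p k
  have hS : ∑ k ∈ range (p + 1), ∑ m ∈ Icc 1 p,
      (-1 : ℚ) ^ (m + k) * (1 / (m : ℚ)) * (p.choose k : ℚ) ^ 2 * (p.choose (m + k) : ℚ) = S := by
    refine sum_congr rfl fun k _ => ?_
    rw [shiftedAltSum, mul_sum]
    refine sum_congr rfl fun m _ => ?_
    ring
  rw [hS]
  have hsymm (r : ℕ) : ∀ k ≤ p, (p.choose (p - k) : ℚ) ^ r = (p.choose k : ℚ) ^ r :=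
    fun k hk => by rw [Nat.choose_symm hk]
  have hS_reflect : ∑ k ∈ range (p + 1),
      (-1) ^ k * (p.choose k : ℚ) ^ 2 * shiftedAltSum p (p - k) = -S :=
    sum_range_neg_one_pow_mul_reflect_of_odd hp (hsymm 2)
  have hB_reflect : ∑ k ∈ range (p + 1), (-1) ^ k * (p.choose k : ℚ) ^ 3 * harmonic (p - k) =
      -altCubeHarmonicSum p :=
    sum_range_neg_one_pow_mul_reflect_of_odd hp (hsymm 3)
  have : S - -S = altCubeHarmonicSum p - -altCubeHarmonicSum p := by
    rw [← hS_reflect, ← hB_reflect, altCubeHarmonicSum, ← sum_sub_distrib, ← sum_sub_distrib]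
    refine sum_congr rfl fun k hk => ?_
    rw [← mul_sub, shiftedAltSum_sub_shiftedAltSum (Nat.add_sub_of_le (mem_range_succ_iff.mp hk))]
    ring
  linarith

namespace AltCubeHarmonicSum

/-! `cert` is the certificate found by Zeilberger's algorithm (creative telescoping) for the
summand `(-1)ᵏ C(p, k)³ Hₖ` with step `2` in `p`. -/

def certP (x k : ℚ) : ℚ :=
  3 * (x + 1) * (3 * x + 4) * (3 * (3 * x + 4) * k ^ 7 - (45 * x ^ 2 + 132 * x + 96) * k ^ 6
    + (87 * x ^ 3 + 396 * x ^ 2 + 594 * x + 294) * k ^ 5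
    - (78 * x ^ 4 + 483 * x ^ 3 + 1107 * x ^ 2 + 1113 * x + 414) * k ^ 4
    + (28 * x ^ 5 + 220 * x ^ 4 + 682 * x ^ 3 + 1042 * x ^ 2 + 784 * x + 232) * k ^ 3)

def certQ (x k : ℚ) : ℚ :=
  -(252 * x ^ 7 + 2568 * x ^ 6 + 11094 * x ^ 5 + 26340 * x ^ 4 + 37122 * x ^ 3 + 31056 * x ^ 2
      + 14280 * x + 2784) * k ^ 2
    + (600 * x ^ 6 + 5104 * x ^ 5 + 17904 * x ^ 4 + 33158 * x ^ 3 + 34198 * x ^ 2 + 18624 * x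
      + 4184) * k ^ 3
    - (603 * x ^ 5 + 4137 * x ^ 4 + 11247 * x ^ 3 + 15147 * x ^ 2 + 10104 * x + 2670) * k ^ 4
    + (288 * x ^ 4 + 1512 * x ^ 3 + 2952 * x ^ 2 + 2538 * x + 810) * k ^ 5
    - (54 * x ^ 3 + 198 * x ^ 2 + 240 * x + 96) * k ^ 6

def cert (p k : ℕ) : ℚ :=
  (-1) ^ k * ((p + 2).choose k : ℚ) ^ 3 * (certP p k * harmonic k + certQ p k) /
    ((p + 1) ^ 3 * (p + 2) ^ 3)

theorem cert_succ_sub_cert (p k : ℕ) :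
    -9 * (p + 1) * (3 * p + 2) * (3 * p + 4) ^ 2 * ((-1) ^ k * (p.choose k : ℚ) ^ 3 * harmonic k)
      - 3 * (p + 1) * (3 * p + 4) * (p + 2) ^ 2 *
        ((-1) ^ k * ((p + 2).choose k : ℚ) ^ 3 * harmonic k)
      + 9 * (p + 1) * (3 * p + 4) ^ 2 * ((-1) ^ k * (p.choose k : ℚ) ^ 3)
      + (p + 2) * (21 * p ^ 2 + 56 * p + 38) * ((-1) ^ k * ((p + 2).choose k : ℚ) ^ 3) =
    cert p (k + 1) - cert p k := by
  have hdown : (p.choose k : ℚ) =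
      (p + 1 - k) * (p + 2 - k) * ((p + 2).choose k : ℚ) / ((p + 1) * (p + 2)) := by
    have h₁ := cast_choose_mul_succ (R := ℚ) p k
    have h₂ := cast_choose_mul_succ (R := ℚ) (p + 1) k
    push_cast [show p + 1 + 1 = p + 2 from rfl] at h₂
    rw [eq_div_iff (by positivity)]
    linear_combination (p + 2 : ℚ) * h₁ + (p + 1 - k : ℚ) * h₂
  have hsucc : ((p + 2).choose (k + 1) : ℚ) = ((p + 2).choose k : ℚ) * (p + 2 - k) / (k + 1) := by
    have h := cast_choose_succ_right (R := ℚ) (p + 2) k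
    push_cast at h
    rw [eq_div_iff (by positivity)]
    linear_combination h
  rw [cert, cert]
  push_cast
  rw [hsucc, harmonic_succ, hdown]
  push_cast
  rw [pow_succ]
  simp only [certP, certQ]
  field_simp
  ring

end AltCubeHarmonicSum

open AltCubeHarmonicSum in
theorem altCubeHarmonicSum_add_two {p : ℕ} (hp : Odd p) :
    altCubeHarmonicSum (p + 2) =
      -(3 * (3 * p + 2) * (3 * p + 4) / (p + 2) ^ 2) * altCubeHarmonicSum p := by
  have hvanish (f : ℕ → ℚ) : ∀ k ∈ range (p + 3), k ∉ range (p + 1) →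
      (-1) ^ k * (p.choose k : ℚ) ^ 3 * f k = 0 := fun k _ hk => by
    rw [Nat.choose_eq_zero_of_lt (by simpa using hk)]
    simp
  have hB : ∑ k ∈ range (p + 3), (-1) ^ k * (p.choose k : ℚ) ^ 3 * harmonic k =
      altCubeHarmonicSum p :=
    (sum_subset (range_subset_range.2 (by omega)) (hvanish harmonic)).symm
  have hA : ∑ k ∈ range (p + 3), (-1) ^ k * (p.choose k : ℚ) ^ 3 = 0 := by
    rw [← sum_range_neg_one_pow_mul_choose_pow_of_odd (R := ℚ) hp 3]
    simpa using (sum_subset (range_subset_range.2 (by omega)) (hvanish 1)).symm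
  have hA₂ : ∑ k ∈ range (p + 3), (-1) ^ k * ((p + 2).choose k : ℚ) ^ 3 = 0 :=
    sum_range_neg_one_pow_mul_choose_pow_of_odd (hp.add_even even_two) 3
  have htel : -9 * (p + 1) * (3 * p + 2) * (3 * p + 4) ^ 2 * altCubeHarmonicSum p
      - 3 * (p + 1) * (3 * p + 4) * (p + 2) ^ 2 * altCubeHarmonicSum (p + 2) = 0 := by
    calc _ = ∑ k ∈ range (p + 3), (cert p (k + 1) - cert p k) := by
          simp only [← cert_succ_sub_cert, sum_add_distrib, sum_sub_distrib, ← mul_sum, hB, hA,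
            hA₂, altCubeHarmonicSum]
          ring
      _ = 0 := by
          rw [sum_range_sub, cert, cert, Nat.choose_eq_zero_of_lt (by omega)]
          simp [certP, certQ]
  have hfactor : 3 * (p + 1) * (3 * p + 4) * ((p + 2) ^ 2 * altCubeHarmonicSum (p + 2)
      + 3 * (3 * p + 2) * (3 * p + 4) * altCubeHarmonicSum p) = (0 : ℚ) := by
    linear_combination -htel
  have hrec := (mul_eq_zero.mp hfactor).resolve_left (by positivity)
  field_simp
  linear_combination hrec

theorem altCubeHarmonicSum_of_odd {p : ℕ} (hp : Odd p) :
    altCubeHarmonicSum p = (-1) ^ ((p + 1) / 2) * ((3 * p)‼ : ℚ) / (3 * (p‼ : ℚ) ^ 3) := by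
  obtain ⟨m, rfl⟩ := hp
  induction m with
  | zero => norm_num [altCubeHarmonicSum, sum_range_succ, harmonic_succ]
  | succ m ih =>
    have hdf₃ : ((3 * (2 * m + 1 + 2))‼ : ℚ) =
        (6 * m + 9) * (6 * m + 7) * (6 * m + 5) * (3 * (2 * m + 1))‼ := by
      rw [show 3 * (2 * m + 1 + 2) = 3 * (2 * m + 1) + 2 + 2 + 2 by ring,
        Nat.doubleFactorial_add_two, Nat.doubleFactorial_add_two, Nat.doubleFactorial_add_two]
      push_cast
      ring
    have hdf : ((2 * m + 1 + 2)‼ : ℚ) = (2 * m + 3) * (2 * m + 1)‼ := by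
      rw [Nat.doubleFactorial_add_two]
      push_cast
      ring
    have hsign : (2 * m + 1 + 2 + 1) / 2 = (2 * m + 1 + 1) / 2 + 1 := by omega
    rw [show 2 * (m + 1) + 1 = 2 * m + 1 + 2 by ring, altCubeHarmonicSum_add_two ⟨m, rfl⟩, ih,
      hdf₃, hdf, hsign, pow_succ]
    push_cast
    field_simp
    ring

theorem stmt7_general (p : ℕ) (hodd : Odd p) :
    ∑ m ∈ Finset.Icc 1 p, ∑ k ∈ Finset.range (p+1),
        (-1 : ℚ)^(m+k) * (1 / (m : ℚ)) * (p.choose k : ℚ)^2 * (p.choose (m + k) : ℚ)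
      = (-1 : ℚ)^((p+1)/2) * (Nat.doubleFactorial (3*p) : ℚ) /
          (3 * (Nat.doubleFactorial p : ℚ)^3) := by
  rw [sum_Icc_sum_range_eq_altCubeHarmonicSum hodd, altCubeHarmonicSum_of_odd hodd]

theorem stmt7 (p : ℕ) (hodd : Odd p) (hp : 0 < p) :
    ∑ m ∈ Finset.Icc 1 p, ∑ k ∈ Finset.range (p+1),
        (-1 : ℚ)^(m+k) * (1 / (m : ℚ)) * (p.choose k : ℚ)^2 * (p.choose (m + k) : ℚ)
      = (-1 : ℚ)^((p+1)/2) * (Nat.doubleFactorial (3*p) : ℚ) /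
          (3 * (Nat.doubleFactorial p : ℚ)^3) :=
  stmt7_general p hodd
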